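/- If two pointed models (M,s) and (M',s') are □-bisimilar, then they are ∘-bisimilar; the converse fails: there are pointed models (namely a single reflexive p-world and a single irreflexive p-world) that are ∘-bisimilar but not □-bisimilar. -/
import Mathlib


/-- A Kripke model. -/
structure Model (W : Type) where
  R : W → W → Prop
  V : ℕ → W → Prop

/-- Z is a ∘-bisimulation on the model M: Z is nonempty and whenever sZs',
(Inv), (∘-Forth) and (∘-Back) hold. -/
def isCircBisim {W : Type} (M : Model W) (Z : W → W → Prop) : Prop :=
  (∃ a b, Z a b) ∧
  ∀ s s', Z s s' →
    ((∀ p, M.V p s ↔ M.V p s') ∧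
     (∀ t, M.R s t → ¬ Z s t → ∃ t', M.R s' t' ∧ Z t t') ∧
     (∀ t', M.R s' t' → ¬ Z s' t' → ∃ t, M.R s t ∧ Z t t'))

/-- The disjoint union of two models. -/
def dsum {W W' : Type} (M : Model W) (M' : Model W') : Model (W ⊕ W') where
  R x y :=
    match x, y with
    | Sum.inl a, Sum.inl b => M.R a b
    | Sum.inr a, Sum.inr b => M'.R a b
    | _, _ => False
  V p x :=
    match x with
    | Sum.inl a => M.V p a
    | Sum.inr a => M'.V p a

/-- (M,s) and (M',s') are ∘-bisimilar: some ∘-bisimulation on the disjoint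
union of M and M' relates s to s'. -/
def circBisimilar {W W' : Type} (M : Model W) (s : W) (M' : Model W') (s' : W') : Prop :=
  ∃ Z, isCircBisim (dsum M M') Z ∧ Z (Sum.inl s) (Sum.inr s')
/-- Z is a □-bisimulation between M and M'. -/
def isBoxBisim {W W' : Type} (M : Model W) (M' : Model W') (Z : W → W' → Prop) : Prop :=
  (∃ a b, Z a b) ∧
  ∀ s s', Z s s' →
    ((∀ p, M.V p s ↔ M'.V p s') ∧
     (∀ t, M.R s t → ∃ t', M'.R s' t' ∧ Z t t') ∧
     (∀ t', M'.R s' t' → ∃ t, M.R s t ∧ Z t t'))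

/-- (M,s) and (M',s') are □-bisimilar. -/
def boxBisimilar {W W' : Type} (M : Model W) (s : W) (M' : Model W') (s' : W') : Prop :=
  ∃ Z, isBoxBisim M M' Z ∧ Z s s'

/-- A single reflexive world where p (= atom 0) is true. -/
def Mrefl : Model Unit := ⟨fun _ _ => True, fun p _ => p = 0⟩

/-- A single irreflexive world where p (= atom 0) is true. -/
def Nirr : Model Unit := ⟨fun _ _ => False, fun p _ => p = 0⟩

/-- □-bisimilarity implies ∘-bisimilarity, but not conversely: a single
reflexive p-world and a single irreflexive p-world are ∘-bisimilar but
not □-bisimilar. -/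
theorem stmt11 :
    (∀ (W W' : Type) [Nonempty W] [Nonempty W'] (M : Model W) (M' : Model W')
        (s : W) (s' : W'), boxBisimilar M s M' s' → circBisimilar M s M' s') ∧
    circBisimilar Mrefl () Nirr () ∧ ¬ boxBisimilar Mrefl () Nirr () := by
  refine ⟨?_, ?_, ?_⟩
  · rintro W W' _ _ M M' s s' ⟨Z, ⟨⟨a, b, hab⟩, hZ⟩, hss⟩
    refine ⟨fun x y => ∃ u v, x = Sum.inl u ∧ y = Sum.inr v ∧ Z u v,
      ⟨⟨Sum.inl a, Sum.inr b, a, b, rfl, rfl, hab⟩, ?_⟩,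
      ⟨s, s', rfl, rfl, hss⟩⟩
    rintro x y ⟨u, v, rfl, rfl, huv⟩
    obtain ⟨hV, hF, hB⟩ := hZ u v huv
    refine ⟨fun p => hV p, ?_, ?_⟩
    · rintro (t | t) ht _
      · obtain ⟨t', ht', hZt⟩ := hF t ht
        exact ⟨Sum.inr t', ht', t, t', rfl, rfl, hZt⟩
      · exact absurd ht (by simp [dsum])
    · rintro (t' | t') ht' _
      · exact absurd ht' (by simp [dsum])
      · obtain ⟨t, ht, hZt⟩ := hB t' ht'
        exact ⟨Sum.inl t, ht, t, t', rfl, rfl, hZt⟩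
  · refine ⟨fun _ _ => True, ⟨⟨Sum.inl (), Sum.inr (), trivial⟩, ?_⟩, trivial⟩
    rintro s s' -
    refine ⟨?_, fun t _ h => absurd trivial h, fun t' _ h => absurd trivial h⟩
    rcases s with ⟨⟩ | ⟨⟩ <;> rcases s' with ⟨⟩ | ⟨⟩ <;> intro p <;> simp [dsum, Mrefl, Nirr]
  · rintro ⟨Z, ⟨-, hZ⟩, hss⟩
    obtain ⟨-, hF, -⟩ := hZ () () hss
    obtain ⟨t', ht', -⟩ := hF () trivial
    exact ht'
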